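/- arXiv:2512.07298 — 4 statements merged into one kernel-verified Lean document; each statement's English description precedes it below -/
import Mathlib

section
/- For all x ∈ ℝ^d: |∇V(x)| ≤ L_V(1 + L_V^η)(1 + 2L_V)(1 + V(0)^η)(1 + V(x)) + |∇V(0)|. -/
open scoped RealInnerProductSpace
open Real Set

/-- The Hilbert–Schmidt norm of a continuous linear map on `EuclideanSpace ℝ (Fin d)`. -/
noncomputable def hsNorm {d : ℕ}
    (A : EuclideanSpace ℝ (Fin d) →L[ℝ] EuclideanSpace ℝ (Fin d)) : ℝ :=
  Real.sqrt (∑ i, ‖A (EuclideanSpace.single i 1)‖ ^ 2)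

/-
Mean value theorem for `∇V` on the segment `[0, x]`: on it `V ≤ L_V (1 + V x + V 0)` by the
mixed bound, so the Hessian bound gives `‖∇V x - ∇V 0‖ ≤ L_V (1 + (L_V (1 + V x + V 0))^η) ‖x‖`.
Subadditivity of `t ↦ t^η` splits the constant into a part in `(1 + V x)^η` and one in `V 0 ^ η`,
and the quadratic bound `V x ^ η ‖x‖² ≤ L_V (1 + 2 V x)` controls `(1 + V x)^η ‖x‖`, hence also
`‖x‖`, linearly in `1 + V x`.
-/

lemma opNorm_le_hsNorm {d : ℕ}
    (A : EuclideanSpace ℝ (Fin d) →L[ℝ] EuclideanSpace ℝ (Fin d)) : ‖A‖ ≤ hsNorm A := by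
  refine A.opNorm_le_bound (Real.sqrt_nonneg _) fun y => ?_
  calc ‖A y‖ = ‖∑ i, y i • A (EuclideanSpace.single i 1)‖ := by
        conv_lhs => rw [← (EuclideanSpace.basisFun (Fin d) ℝ).sum_repr y]
        simp
    _ ≤ ∑ i, ‖y i‖ * ‖A (EuclideanSpace.single i 1)‖ :=
        (norm_sum_le _ _).trans_eq (by simp only [norm_smul])
    _ ≤ √(∑ i, ‖y i‖ ^ 2) * √(∑ i, ‖A (EuclideanSpace.single i 1)‖ ^ 2) :=
        Real.sum_mul_le_sqrt_mul_sqrt _ _ _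
    _ = hsNorm A * ‖y‖ := by rw [hsNorm, EuclideanSpace.norm_eq, mul_comm]

section Gradient

variable {E : Type*} [NormedAddCommGroup E] [InnerProductSpace ℝ E] [CompleteSpace E]

lemma ContDiff.differentiable_gradient {f : E → ℝ} (hf : ContDiff ℝ 2 f) :
    Differentiable ℝ (gradient f) :=
  ((InnerProductSpace.toDual ℝ E).symm.contDiff.comp
    (hf.fderiv_right (m := 1) (by norm_num))).differentiable one_ne_zero

lemma norm_gradient_sub_le {V : E → ℝ} {L η : ℝ} (hL : 0 ≤ L) (hη : 0 ≤ η)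
    (hV : ContDiff ℝ 2 V) (hV1 : ∀ x, 1 ≤ V x)
    (hHess : ∀ x, ‖fderiv ℝ (gradient V) x‖ ≤ L * (1 + V x ^ η))
    (hMix : ∀ x y : E, ∀ u ∈ Icc (0 : ℝ) 1, V (y + u • (x - y)) ≤ L * (1 + V x + V y))
    (x y : E) :
    ‖gradient V x - gradient V y‖ ≤ L * (1 + (L * (1 + V x + V y)) ^ η) * ‖x - y‖ := by
  have hseg : ∀ z ∈ segment ℝ y x,
      ‖fderiv ℝ (gradient V) z‖ ≤ L * (1 + (L * (1 + V x + V y)) ^ η) := by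
    rw [segment_eq_image']
    rintro _ ⟨u, hu, rfl⟩
    refine (hHess _).trans ?_
    have := hV1 (y + u • (x - y))
    gcongr
    exact hMix x y u hu
  exact (convex_segment y x).norm_image_sub_le_of_norm_fderiv_le
    (fun z _ => hV.differentiable_gradient z) hseg (left_mem_segment ℝ y x)
    (right_mem_segment ℝ y x)

end Gradient

lemma one_add_rpow_mul_le {L η a n : ℝ} (hL : 0 ≤ L) (hη0 : 0 ≤ η) (hη1 : η ≤ 1)
    (ha : 1 ≤ a) (h : a ^ η * n ^ 2 ≤ L * (1 + 2 * a)) :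
    (1 + a) ^ η * n ≤ (1 + 2 * L) * (1 + a) := by
  have hs0 : 0 ≤ (1 + a) ^ η := by positivity
  have hs_le : (1 + a) ^ η ≤ 1 + a := by
    simpa using Real.rpow_le_rpow_of_exponent_le (by linarith : (1 : ℝ) ≤ 1 + a) hη1
  have hs_le' : (1 + a) ^ η ≤ 2 * a ^ η :=
    calc (1 + a) ^ η ≤ (2 * a) ^ η := by gcongr; linarith
      _ = 2 ^ η * a ^ η := Real.mul_rpow zero_le_two (by linarith)
      _ ≤ 2 * a ^ η := by
          gcongr
          simpa using Real.rpow_le_rpow_of_exponent_le one_le_two hη1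
  -- AM-GM: `s n ≤ (s + s n²) / 2`, with `s ≤ 1 + a` and `s n² ≤ 2 a^η n²`.
  nlinarith [mul_nonneg hs0 (sq_nonneg (n - 1)), mul_le_mul_of_nonneg_right hs_le' (sq_nonneg n)]

lemma mul_one_add_rpow_mul_le {L η a b n : ℝ} (hL : 0 ≤ L) (hη0 : 0 ≤ η) (hη1 : η ≤ 1)
    (ha : 1 ≤ a) (hb : 0 ≤ b) (hn : 0 ≤ n) (h : a ^ η * n ^ 2 ≤ L * (1 + 2 * a)) :
    L * (1 + (L * (1 + a + b)) ^ η) * n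
      ≤ L * (1 + L ^ η) * (1 + 2 * L) * (1 + b ^ η) * (1 + a) := by
  have hsn := one_add_rpow_mul_le hL hη0 hη1 ha h
  have hs1 : 1 ≤ (1 + a) ^ η := Real.one_le_rpow (by linarith) hη0
  have hsplit : (L * (1 + a + b)) ^ η ≤ L ^ η * ((1 + a) ^ η + b ^ η) := by
    rw [Real.mul_rpow hL (by linarith)]
    gcongr
    exact Real.rpow_add_le_add_rpow (by linarith) hb hη0 hη1
  have hLη : 0 ≤ L ^ η := by positivity
  have hbη : 0 ≤ b ^ η := by positivity
  calc L * (1 + (L * (1 + a + b)) ^ η) * n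
      ≤ L * (1 + L ^ η * ((1 + a) ^ η + b ^ η)) * n := by gcongr
    _ ≤ L * (1 + L ^ η + L ^ η * b ^ η) * ((1 + a) ^ η * n) := by
        have : n ≤ (1 + a) ^ η * n := le_mul_of_one_le_left hn hs1
        have : b ^ η * n ≤ b ^ η * ((1 + a) ^ η * n) := by gcongr
        nlinarith [mul_nonneg hL hLη]
    _ ≤ L * (1 + L ^ η + L ^ η * b ^ η) * ((1 + 2 * L) * (1 + a)) := by gcongr
    _ ≤ L * (1 + L ^ η) * (1 + 2 * L) * (1 + b ^ η) * (1 + a) := by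
        have : 0 ≤ (1 + 2 * L) * (1 + a) := by positivity
        nlinarith [mul_nonneg (mul_nonneg hL this) hbη]

theorem stmt_3_general (d : ℕ) (LV η : ℝ) (hLV : 0 < LV) (hη : η ∈ Set.Ico (0:ℝ) 1)
    (V : EuclideanSpace ℝ (Fin d) → ℝ) (hV : ContDiff ℝ 2 V) (hV1 : ∀ x, 1 ≤ V x)
    (hHess : ∀ x, hsNorm (fderiv ℝ (gradient V) x) ≤ LV * (1 + V x ^ η))
    (hMix : ∀ x y : EuclideanSpace ℝ (Fin d), ∀ u ∈ Set.Icc (0:ℝ) 1,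
      V (y + u • (x - y)) ≤ LV * (1 + V x + V y))
    (hQuad : ∀ x y : EuclideanSpace ℝ (Fin d), V x ^ η * ‖y‖ ^ 2 ≤ LV * (1 + V x + V y))
    (x : EuclideanSpace ℝ (Fin d)) :
    ‖gradient V x‖
      ≤ LV * (1 + LV ^ η) * (1 + 2 * LV) * (1 + V (0 : EuclideanSpace ℝ (Fin d)) ^ η) * (1 + V x)
        + ‖gradient V (0 : EuclideanSpace ℝ (Fin d))‖ := by
  obtain ⟨hη0, hη1⟩ := hη
  have hDiff := norm_gradient_sub_le hLV.le hη0 hV hV1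
    (fun z => (opNorm_le_hsNorm _).trans (hHess z)) hMix x 0
  rw [sub_zero] at hDiff
  have hquad : V x ^ η * ‖x‖ ^ 2 ≤ LV * (1 + 2 * V x) := by linarith [hQuad x x]
  have hconst := mul_one_add_rpow_mul_le hLV.le hη0 hη1.le (hV1 x) (zero_le_one.trans (hV1 0))
    (norm_nonneg x) hquad
  linarith [norm_sub_norm_le (gradient V x) (gradient V 0)]

theorem stmt_3 (d : ℕ) (hd : 1 ≤ d) (LV η : ℝ) (hLV : 0 < LV) (hη : η ∈ Set.Ico (0:ℝ) 1)
    (V : EuclideanSpace ℝ (Fin d) → ℝ) (hV : ContDiff ℝ 2 V) (hV1 : ∀ x, 1 ≤ V x)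
    (hHess : ∀ x, hsNorm (fderiv ℝ (gradient V) x) ≤ LV * (1 + V x ^ η))
    (hMix : ∀ x y : EuclideanSpace ℝ (Fin d), ∀ u ∈ Set.Icc (0:ℝ) 1,
      V (y + u • (x - y)) ≤ LV * (1 + V x + V y))
    (hQuad : ∀ x y : EuclideanSpace ℝ (Fin d), V x ^ η * ‖y‖ ^ 2 ≤ LV * (1 + V x + V y))
    (x : EuclideanSpace ℝ (Fin d)) :
    ‖gradient V x‖
      ≤ LV * (1 + LV ^ η) * (1 + 2 * LV) * (1 + V (0 : EuclideanSpace ℝ (Fin d)) ^ η) * (1 + V x)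
        + ‖gradient V (0 : EuclideanSpace ℝ (Fin d))‖ :=
  stmt_3_general d LV η hLV hη V hV hV1 hHess hMix hQuad x
end

section
/- For all δ ∈ (0, 2^{−1/θ}] and all x, y ∈ ℝ^d: |b(x) − b^{(δ)}(y)| ≤ K₂|x−y|^α + L₀(1+|x|^{ℓ₀}+|y|^{ℓ₀})|x−y| + 2^{1/(2θ)}·δ^{1/2}·(λ* + L₀(1+2|y|^{ℓ₀}))·|y|^{1+ℓ₀/(2θ)}. -/
open scoped RealInnerProductSpace
open Real Set

open Classical in
/-- The truncation map `π^{(δ,θ)}(x) = (min(|x|, (δ^{-θ}-1)^{1/ℓ₀})) x/|x|`, with `π(0) = 0`. -/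
noncomputable def truncMap {d : ℕ} (δ θ ℓ₀ : ℝ) (x : EuclideanSpace ℝ (Fin d)) :
    EuclideanSpace ℝ (Fin d) :=
  if x = 0 then 0 else (min ‖x‖ ((δ ^ (-θ) - 1) ^ (1 / ℓ₀))) • ‖x‖⁻¹ • x

/-- The modified truncated Euler drift
`b^{(δ)}(x) = -λ* x + b₀(x) + (b₁(π^{(δ,θ)}(x)) + λ* π^{(δ,θ)}(x))`. -/
noncomputable def truncDrift {d : ℕ}
    (b₀ b₁ : EuclideanSpace ℝ (Fin d) → EuclideanSpace ℝ (Fin d))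
    (lamStar δ θ ℓ₀ : ℝ) (x : EuclideanSpace ℝ (Fin d)) : EuclideanSpace ℝ (Fin d) :=
  -(lamStar • x) + b₀ x + (b₁ (truncMap δ θ ℓ₀ x) + lamStar • truncMap δ θ ℓ₀ x)

/-! The difference `b(x) - b^{(δ)}(y)` splits as
`(b₀ x - b₀ y) + (b₁ x - b₁ y) + (b̄₁ y - b̄₁ (π y))`. The first two terms are bounded by the Hölder
and local Lipschitz conditions. For the third, `π y = c • y` with `c ∈ [0, 1]`, so the local Lipschitz bound of `b̄₁` has constant
`λ* + L₀(1 + 2|y|^{ℓ₀})`, and `|y - π y|` vanishes unless `|y|^{ℓ₀} > δ^{-θ} - 1 ≥ δ^{-θ}/2`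
(using `δ^{-θ} ≥ 2`), in which case `|y| ≤ (2 δ^θ |y|^{ℓ₀})^{1/(2θ)} |y|`. -/

lemma le_rpow_mul_rpow_mul_rpow_of_one_le {r δ θ ℓ : ℝ} (hr : 0 ≤ r) (hδ : 0 ≤ δ) (hθ : 0 < θ)
    (h : 1 ≤ 2 * δ ^ θ * r ^ ℓ) :
    r ≤ 2 ^ (1 / (2 * θ)) * δ ^ ((1:ℝ) / 2) * r ^ (1 + ℓ / (2 * θ)) := by
  rcases hr.eq_or_lt with rfl | hr
  · positivity
  have hfactor : 2 ^ (1 / (2 * θ)) * δ ^ ((1:ℝ) / 2) * r ^ (ℓ / (2 * θ))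
      = (2 * δ ^ θ * r ^ ℓ) ^ (1 / (2 * θ)) := by
    rw [mul_rpow (by positivity) (by positivity), mul_rpow (by norm_num) (by positivity),
      ← rpow_mul hδ, ← rpow_mul hr.le]
    congr 2 <;> field_simp
  calc r = r * 1 := (mul_one r).symm
    _ ≤ r * (2 * δ ^ θ * r ^ ℓ) ^ (1 / (2 * θ)) := by
        gcongr; exact one_le_rpow h (by positivity)
    _ = 2 ^ (1 / (2 * θ)) * δ ^ ((1:ℝ) / 2) * r ^ (1 + ℓ / (2 * θ)) := by
        rw [← hfactor, rpow_add hr, rpow_one]; ring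

lemma two_le_rpow_neg_of_le_two_rpow {δ θ : ℝ} (hδ : 0 < δ) (hθ : 0 < θ)
    (h : δ ≤ (2:ℝ) ^ (-(1 / θ))) : 2 ≤ δ ^ (-θ) := by
  calc (2:ℝ) = ((2:ℝ) ^ (-(1 / θ))) ^ (-θ) := by
        rw [← rpow_mul (by norm_num), show -(1 / θ) * -θ = 1 by field_simp, rpow_one]
    _ ≤ δ ^ (-θ) := rpow_le_rpow_of_nonpos hδ h (by linarith)

section truncMap

variable {d : ℕ} {δ θ ℓ₀ : ℝ}

lemma truncMap_eq_smul (hR : 0 ≤ (δ ^ (-θ) - 1) ^ (1 / ℓ₀)) (y : EuclideanSpace ℝ (Fin d)) :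
    ∃ c ∈ Icc (0:ℝ) 1, truncMap δ θ ℓ₀ y = c • y := by
  by_cases hy : y = 0
  · exact ⟨0, by simp, by simp [truncMap, hy]⟩
  have hy' : 0 < ‖y‖ := norm_pos_iff.mpr hy
  refine ⟨min ‖y‖ ((δ ^ (-θ) - 1) ^ (1 / ℓ₀)) * ‖y‖⁻¹, ⟨by positivity, ?_⟩, ?_⟩
  · rw [mul_inv_le_iff₀ hy', one_mul]; exact min_le_left _ _
  · rw [truncMap, if_neg hy, smul_smul]

lemma truncMap_eq_self (y : EuclideanSpace ℝ (Fin d)) (h : ‖y‖ ≤ (δ ^ (-θ) - 1) ^ (1 / ℓ₀)) :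
    truncMap δ θ ℓ₀ y = y := by
  by_cases hy : y = 0
  · simp [truncMap, hy]
  rw [truncMap, if_neg hy, min_eq_left h, smul_smul,
    mul_inv_cancel₀ (norm_ne_zero_iff.mpr hy), one_smul]

lemma norm_truncMap_le (hR : 0 ≤ (δ ^ (-θ) - 1) ^ (1 / ℓ₀)) (y : EuclideanSpace ℝ (Fin d)) :
    ‖truncMap δ θ ℓ₀ y‖ ≤ ‖y‖ := by
  obtain ⟨c, ⟨hc0, hc1⟩, hc⟩ := truncMap_eq_smul hR y
  rw [hc, norm_smul, norm_of_nonneg hc0]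
  exact mul_le_of_le_one_left (norm_nonneg y) hc1

lemma norm_sub_truncMap_le_norm (hR : 0 ≤ (δ ^ (-θ) - 1) ^ (1 / ℓ₀))
    (y : EuclideanSpace ℝ (Fin d)) : ‖y - truncMap δ θ ℓ₀ y‖ ≤ ‖y‖ := by
  obtain ⟨c, ⟨hc0, hc1⟩, hc⟩ := truncMap_eq_smul hR y
  rw [hc, show y - c • y = (1 - c) • y by rw [sub_smul, one_smul], norm_smul,
    norm_of_nonneg (by linarith)]
  exact mul_le_of_le_one_left (norm_nonneg y) (by linarith)

lemma norm_sub_truncMap_le (hδ : 0 < δ) (hθ : 0 < θ) (hℓ₀ : 0 < ℓ₀) (h2 : 2 ≤ δ ^ (-θ))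
    (y : EuclideanSpace ℝ (Fin d)) :
    ‖y - truncMap δ θ ℓ₀ y‖ ≤ 2 ^ (1 / (2 * θ)) * δ ^ ((1:ℝ) / 2) * ‖y‖ ^ (1 + ℓ₀ / (2 * θ)) := by
  set R := (δ ^ (-θ) - 1) ^ (1 / ℓ₀) with hRdef
  have hR : 0 ≤ R := rpow_nonneg (by linarith) _
  rcases le_or_gt ‖y‖ R with hle | hgt
  · rw [truncMap_eq_self y hle, sub_self, norm_zero]; positivity
  have hRpow : R ^ ℓ₀ = δ ^ (-θ) - 1 := by
    rw [hRdef, ← rpow_mul (by linarith), one_div_mul_cancel hℓ₀.ne', rpow_one]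
  have hlarge : 1 ≤ 2 * δ ^ θ * ‖y‖ ^ ℓ₀ :=
    calc (1:ℝ) = δ ^ θ * δ ^ (-θ) := by rw [← rpow_add hδ, add_neg_cancel, rpow_zero]
      _ ≤ δ ^ θ * (2 * R ^ ℓ₀) := by rw [hRpow]; gcongr; linarith
      _ ≤ 2 * δ ^ θ * ‖y‖ ^ ℓ₀ := by
        rw [← mul_assoc, mul_comm (δ ^ θ) 2]; gcongr
  exact (norm_sub_truncMap_le_norm hR y).trans
    (le_rpow_mul_rpow_mul_rpow_of_one_le (norm_nonneg y) hδ.le hθ hlarge)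

end truncMap

lemma norm_add_smul_sub_add_smul_le {d : ℕ} {b₁ : EuclideanSpace ℝ (Fin d) → EuclideanSpace ℝ (Fin d)}
    {L₀ ℓ₀ lamStar : ℝ} (hL₀ : 0 ≤ L₀) (hℓ₀ : 0 ≤ ℓ₀) (hlam : 0 ≤ lamStar)
    (hb₁ : ∀ x y, ‖b₁ x - b₁ y‖ ≤ L₀ * (1 + ‖x‖ ^ ℓ₀ + ‖y‖ ^ ℓ₀) * ‖x - y‖)
    {y p : EuclideanSpace ℝ (Fin d)} (hp : ‖p‖ ≤ ‖y‖) :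
    ‖(b₁ y + lamStar • y) - (b₁ p + lamStar • p)‖
      ≤ (lamStar + L₀ * (1 + 2 * ‖y‖ ^ ℓ₀)) * ‖y - p‖ := by
  have hpow : ‖p‖ ^ ℓ₀ ≤ ‖y‖ ^ ℓ₀ := rpow_le_rpow (norm_nonneg p) hp hℓ₀
  calc ‖(b₁ y + lamStar • y) - (b₁ p + lamStar • p)‖
      = ‖(b₁ y - b₁ p) + lamStar • (y - p)‖ := by rw [smul_sub]; abel_nf
    _ ≤ ‖b₁ y - b₁ p‖ + lamStar * ‖y - p‖ := by
        refine (norm_add_le _ _).trans_eq ?_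
        rw [norm_smul, norm_of_nonneg hlam]
    _ ≤ L₀ * (1 + ‖y‖ ^ ℓ₀ + ‖p‖ ^ ℓ₀) * ‖y - p‖ + lamStar * ‖y - p‖ := by
        gcongr; exact hb₁ y p
    _ ≤ L₀ * (1 + 2 * ‖y‖ ^ ℓ₀) * ‖y - p‖ + lamStar * ‖y - p‖ := by
        gcongr L₀ * ?_ * _ + _; linarith
    _ = (lamStar + L₀ * (1 + 2 * ‖y‖ ^ ℓ₀)) * ‖y - p‖ := by ring

theorem stmt_8_general (d : ℕ)
    (b₀ b₁ b : EuclideanSpace ℝ (Fin d) → EuclideanSpace ℝ (Fin d))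
    (hb : ∀ x, b x = b₀ x + b₁ x)
    (K₂ α : ℝ)
    (hb₀ : ∀ x y, ‖b₀ x - b₀ y‖ ≤ K₂ * ‖x - y‖ ^ α)
    (L₀ ℓ₀ : ℝ) (hL₀ : 0 < L₀) (hℓ₀ : 0 < ℓ₀)
    (hb₁ : ∀ x y, ‖b₁ x - b₁ y‖ ≤ L₀ * (1 + ‖x‖ ^ ℓ₀ + ‖y‖ ^ ℓ₀) * ‖x - y‖)
    (lamStar : ℝ) (hlam : 0 < lamStar)
    (θ : ℝ) (hθ : θ ∈ Set.Ioo (0:ℝ) (1/2)) :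
    ∀ δ : ℝ, 0 < δ → δ ≤ (2:ℝ) ^ (-(1/θ)) →
      ∀ x y : EuclideanSpace ℝ (Fin d),
        ‖b x - truncDrift b₀ b₁ lamStar δ θ ℓ₀ y‖
          ≤ K₂ * ‖x - y‖ ^ α + L₀ * (1 + ‖x‖ ^ ℓ₀ + ‖y‖ ^ ℓ₀) * ‖x - y‖
            + 2 ^ (1 / (2 * θ)) * δ ^ ((1:ℝ)/2)
              * (lamStar + L₀ * (1 + 2 * ‖y‖ ^ ℓ₀)) * ‖y‖ ^ (1 + ℓ₀ / (2 * θ)) := by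
  intro δ hδ hδ2 x y
  have h2 := two_le_rpow_neg_of_le_two_rpow hδ hθ.1 hδ2
  set p := truncMap δ θ ℓ₀ y
  have hp : ‖p‖ ≤ ‖y‖ := norm_truncMap_le (rpow_nonneg (by linarith) _) y
  have hdecomp : b x - truncDrift b₀ b₁ lamStar δ θ ℓ₀ y
      = (b₀ x - b₀ y) + (b₁ x - b₁ y) + ((b₁ y + lamStar • y) - (b₁ p + lamStar • p)) := by
    rw [hb x, truncDrift]; abel
  calc ‖b x - truncDrift b₀ b₁ lamStar δ θ ℓ₀ y‖
      ≤ ‖b₀ x - b₀ y‖ + ‖b₁ x - b₁ y‖ + ‖(b₁ y + lamStar • y) - (b₁ p + lamStar • p)‖ :=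
        hdecomp ▸ norm_add₃_le
    _ ≤ K₂ * ‖x - y‖ ^ α + L₀ * (1 + ‖x‖ ^ ℓ₀ + ‖y‖ ^ ℓ₀) * ‖x - y‖
        + (lamStar + L₀ * (1 + 2 * ‖y‖ ^ ℓ₀))
          * (2 ^ (1 / (2 * θ)) * δ ^ ((1:ℝ)/2) * ‖y‖ ^ (1 + ℓ₀ / (2 * θ))) := by
        gcongr
        · exact hb₀ x y
        · exact hb₁ x y
        · exact (norm_add_smul_sub_add_smul_le hL₀.le hℓ₀.le hlam.le hb₁ hp).trans
            (by gcongr; exact norm_sub_truncMap_le hδ hθ.1 hℓ₀ h2 y)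
    _ = _ := by ring

theorem stmt_8 (d : ℕ) (hd : 1 ≤ d)
    (b₀ b₁ b : EuclideanSpace ℝ (Fin d) → EuclideanSpace ℝ (Fin d))
    (hb : ∀ x, b x = b₀ x + b₁ x)
    (K₂ α : ℝ) (hK₂ : 0 < K₂) (hα : α ∈ Set.Ioo (0:ℝ) 1)
    (hb₀ : ∀ x y, ‖b₀ x - b₀ y‖ ≤ K₂ * ‖x - y‖ ^ α)
    (L₀ ℓ₀ : ℝ) (hL₀ : 0 < L₀) (hℓ₀ : 0 < ℓ₀)
    (hb₁ : ∀ x y, ‖b₁ x - b₁ y‖ ≤ L₀ * (1 + ‖x‖ ^ ℓ₀ + ‖y‖ ^ ℓ₀) * ‖x - y‖)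
    (lamStar Cstar : ℝ) (hlam : 0 < lamStar) (hCstar : 0 < Cstar)
    (hdiss : ∀ x, ⟪x, b₁ x⟫ ≤ -(lamStar * ‖x‖ ^ 2) + Cstar)
    (θ : ℝ) (hθ : θ ∈ Set.Ioo (0:ℝ) (1/2)) :
    ∀ δ : ℝ, 0 < δ → δ ≤ (2:ℝ) ^ (-(1/θ)) →
      ∀ x y : EuclideanSpace ℝ (Fin d),
        ‖b x - truncDrift b₀ b₁ lamStar δ θ ℓ₀ y‖
          ≤ K₂ * ‖x - y‖ ^ α + L₀ * (1 + ‖x‖ ^ ℓ₀ + ‖y‖ ^ ℓ₀) * ‖x - y‖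
            + 2 ^ (1 / (2 * θ)) * δ ^ ((1:ℝ)/2)
              * (lamStar + L₀ * (1 + 2 * ‖y‖ ^ ℓ₀)) * ‖y‖ ^ (1 + ℓ₀ / (2 * θ)) :=
  stmt_8_general d b₀ b₁ b hb K₂ α hb₀ L₀ ℓ₀ hL₀ hℓ₀ hb₁ lamStar hlam θ hθ
end

section
/- There exist δ₀ ∈ (0,1] and C > 0, both depending only on λ*, C*, K₂, α, L₀, ℓ₀, θ, |b₀(0)| and |b₁(0)|, such that for all δ ∈ (0, δ₀] and all x ∈ ℝ^d: ⟨x, b^{(δ)}(x)⟩ + δ|b^{(δ)}(x)|² ≤ −(λ*/4)|x|² + C. -/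
open scoped RealInnerProductSpace
open Real Set

/-- The modified tamed Euler drift
`b^{(δ)}(x) = b₀(x) - λ* x + (b₁(x) + λ* x)/(1 + δ^{2θ}|x|^{2ℓ₀})^{1/2}`. -/
noncomputable def tamedDrift {d : ℕ}
    (b₀ b₁ : EuclideanSpace ℝ (Fin d) → EuclideanSpace ℝ (Fin d))
    (lamStar δ θ ℓ₀ : ℝ) (x : EuclideanSpace ℝ (Fin d)) : EuclideanSpace ℝ (Fin d) :=
  b₀ x - lamStar • x
    + (((1 + δ ^ (2 * θ) * ‖x‖ ^ (2 * ℓ₀)) ^ ((1:ℝ)/2))⁻¹) • (b₁ x + lamStar • x)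

/-! With `g ∈ (0, 1]` the taming factor, `⟨x, b^{(δ)}(x)⟩ = ⟨x, b₀ x⟩ - λ*|x|² +
g (⟨x, b₁ x⟩ + λ*|x|²) ≤ ⟨x, b₀ x⟩ - λ*|x|² + C*`, and since `b₀` grows like `|x|^α` with `α < 1`,
Young's inequality gives `⟨x, b₀ x⟩ ≤ (λ*/4)|x|² + C`. The taming gives `g |x|^{ℓ₀} ≤ δ^{-θ}`, so
the superlinear part of `b₁` contributes at most `L₀ δ^{-θ}|x|` to `|b^{(δ)}(x)|`, whence
`δ |b^{(δ)}(x)|² ≤ 4A²δ + (4A²δ + 2L₀²δ^{1-2θ})|x|²` for a constant `A`. As `θ < 1/2`, the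
coefficient of `|x|²` tends to `0` with `δ`, so it is below `λ*/4` for small `δ`. -/

lemma rpow_le_one_add {t α : ℝ} (ht : 0 ≤ t) (hα : α ∈ Icc (0:ℝ) 1) : t ^ α ≤ 1 + t := by
  rcases le_total t 1 with h | h
  · linarith [Real.rpow_le_one ht h hα.1]
  · have : t ^ α ≤ t ^ (1:ℝ) := Real.rpow_le_rpow_of_exponent_le h hα.2
    rw [Real.rpow_one] at this
    linarith

lemma exists_rpow_mul_self_le_sq_add {α ε : ℝ} (hα : α ∈ Ico (0:ℝ) 1) (hε : 0 < ε) :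
    ∃ C, ∀ t, 0 ≤ t → t ^ α * t ≤ ε * t ^ 2 + C := by
  set T := (1 / ε) ^ (1 / (1 - α))
  have hα1 : 0 < 1 - α := by linarith [hα.2]
  refine ⟨T ^ α * T, fun t ht => ?_⟩
  rcases le_total t T with h | h
  · calc t ^ α * t ≤ T ^ α * T :=
          mul_le_mul (Real.rpow_le_rpow ht h hα.1) h ht (by positivity)
      _ ≤ ε * t ^ 2 + T ^ α * T := le_add_of_nonneg_left (by positivity)
  · have hT : 1 / ε = T ^ (1 - α) := by
      rw [← Real.rpow_mul (by positivity), one_div_mul_cancel hα1.ne', Real.rpow_one]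
    have ht0 : 0 < t := lt_of_lt_of_le (by positivity) h
    have hεt : 1 ≤ ε * t ^ (1 - α) := by
      rw [← div_le_iff₀' hε, hT]
      exact Real.rpow_le_rpow (by positivity) h hα1.le
    have hsplit : t ^ (1 - α) * t ^ α = t := by
      rw [← Real.rpow_add ht0, sub_add_cancel, Real.rpow_one]
    calc t ^ α * t ≤ ε * t ^ (1 - α) * (t ^ α * t) := le_mul_of_one_le_left (by positivity) hεt
      _ = ε * (t ^ (1 - α) * t ^ α) * t := by ring
      _ = ε * t ^ 2 := by rw [hsplit]; ring
      _ ≤ ε * t ^ 2 + T ^ α * T := le_add_of_nonneg_right (by positivity)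

lemma exists_mul_rpow_add_le_sq_add {α ε K : ℝ} (hα : α ∈ Ico (0:ℝ) 1) (hε : 0 < ε)
    (hK : 0 < K) (M : ℝ) :
    ∃ C, ∀ t, 0 ≤ t → t * (K * t ^ α + M) ≤ ε * t ^ 2 + C := by
  obtain ⟨C, hC⟩ := exists_rpow_mul_self_le_sq_add hα (by positivity : 0 < ε / (2 * K))
  refine ⟨K * C + M ^ 2 / (2 * ε), fun t ht => ?_⟩
  have hsub := mul_le_mul_of_nonneg_left (hC t ht) hK.le
  have hlin : M * t ≤ ε / 2 * t ^ 2 + M ^ 2 / (2 * ε) := by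
    have hsq : M * t = ε / 2 * t ^ 2 + M ^ 2 / (2 * ε) - (ε * t - M) ^ 2 / (2 * ε) := by
      field_simp
      ring
    linarith [div_nonneg (sq_nonneg (ε * t - M)) (by positivity : (0:ℝ) ≤ 2 * ε)]
  have hK' : K * (ε / (2 * K)) = ε / 2 := by field_simp
  nlinarith

lemma exists_Ioc_forall_of_eventually_nhds_zero {p : ℝ → Prop} (h : ∀ᶠ δ in nhds 0, p δ) :
    ∃ δ₀ ∈ Ioc (0:ℝ) 1, ∀ δ ∈ Ioc 0 δ₀, p δ := by
  obtain ⟨ε, hε, hp⟩ := Metric.eventually_nhds_iff.1 h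
  refine ⟨min 1 (ε / 2), ⟨by positivity, min_le_left _ _⟩, fun δ hδ => hp ?_⟩
  rw [Real.dist_0_eq_abs, abs_of_pos hδ.1]
  linarith [hδ.2.trans (min_le_right _ _)]

section GrowthBounds

variable {E F : Type*} [NormedAddCommGroup E] [NormedAddCommGroup F]

lemma norm_le_of_holder {f : E → F} {K α : ℝ} (hf : ∀ x y, ‖f x - f y‖ ≤ K * ‖x - y‖ ^ α)
    (x : E) : ‖f x‖ ≤ K * ‖x‖ ^ α + ‖f 0‖ := by
  have := hf x 0
  rw [sub_zero] at this
  linarith [norm_le_insert' (f x) (f 0)]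

lemma norm_le_of_polynomial_lipschitz {f : E → F} {L ℓ : ℝ} (hℓ : ℓ ≠ 0)
    (hf : ∀ x y, ‖f x - f y‖ ≤ L * (1 + ‖x‖ ^ ℓ + ‖y‖ ^ ℓ) * ‖x - y‖) (x : E) :
    ‖f x‖ ≤ L * (1 + ‖x‖ ^ ℓ) * ‖x‖ + ‖f 0‖ := by
  have := hf x 0
  rw [sub_zero, norm_zero, Real.zero_rpow hℓ, add_zero] at this
  linarith [norm_le_insert' (f x) (f 0)]

end GrowthBounds

noncomputable def tamingFactor (δ θ ℓ₀ t : ℝ) : ℝ :=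
  ((1 + δ ^ (2 * θ) * t ^ (2 * ℓ₀)) ^ ((1:ℝ)/2))⁻¹

section TamingFactor

variable {δ θ ℓ₀ t : ℝ}

lemma tamingFactor_eq_inv_sqrt (hδ : 0 ≤ δ) (ht : 0 ≤ t) :
    tamingFactor δ θ ℓ₀ t = (√(1 + (δ ^ θ * t ^ ℓ₀) ^ 2))⁻¹ := by
  rw [tamingFactor, Real.sqrt_eq_rpow, mul_pow, ← Real.rpow_mul_natCast hδ,
    ← Real.rpow_mul_natCast ht, Nat.cast_ofNat, mul_comm θ, mul_comm ℓ₀]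

lemma tamingFactor_pos (hδ : 0 ≤ δ) (ht : 0 ≤ t) : 0 < tamingFactor δ θ ℓ₀ t := by
  rw [tamingFactor_eq_inv_sqrt hδ ht]
  positivity

lemma tamingFactor_le_one (hδ : 0 ≤ δ) (ht : 0 ≤ t) : tamingFactor δ θ ℓ₀ t ≤ 1 := by
  rw [tamingFactor_eq_inv_sqrt hδ ht]
  exact inv_le_one_of_one_le₀ (Real.one_le_sqrt.2 (le_add_of_nonneg_right (sq_nonneg _)))

lemma tamingFactor_mul_rpow_le (hδ : 0 < δ) (ht : 0 ≤ t) :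
    tamingFactor δ θ ℓ₀ t * t ^ ℓ₀ ≤ δ ^ (-θ) := by
  set s := δ ^ θ * t ^ ℓ₀
  have hδθ : 0 < δ ^ θ := Real.rpow_pos_of_pos hδ θ
  have hs : s ≤ √(1 + s ^ 2) := Real.le_sqrt_of_sq_le (le_add_of_nonneg_left zero_le_one)
  calc tamingFactor δ θ ℓ₀ t * t ^ ℓ₀ = (δ ^ θ)⁻¹ * (s / √(1 + s ^ 2)) := by
        rw [tamingFactor_eq_inv_sqrt hδ.le ht]
        field_simp
        simp only [s, mul_pow]
        ring
    _ ≤ (δ ^ θ)⁻¹ * 1 :=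
        mul_le_mul_of_nonneg_left (div_le_one_of_le₀ hs (Real.sqrt_nonneg _)) (by positivity)
    _ = δ ^ (-θ) := by rw [mul_one, Real.rpow_neg hδ.le]

end TamingFactor

lemma mul_sq_le_of_le_add_rpow_neg_mul {A L t δ θ N : ℝ} (hN : 0 ≤ N) (hδ : 0 < δ)
    (h : N ≤ A * (1 + t) + L * δ ^ (-θ) * t) :
    δ * N ^ 2 ≤ 4 * A ^ 2 * δ + (4 * A ^ 2 * δ + 2 * L ^ 2 * δ ^ (1 - 2 * θ)) * t ^ 2 := by
  have hpow : δ * (δ ^ (-θ)) ^ 2 = δ ^ (1 - 2 * θ) := by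
    rw [← Real.rpow_mul_natCast hδ.le, Nat.cast_ofNat, show 1 - 2 * θ = 1 + -θ * 2 by ring,
      Real.rpow_add hδ, Real.rpow_one]
  have hsq : N ^ 2 ≤ 4 * A ^ 2 * (1 + t ^ 2) + 2 * L ^ 2 * (δ ^ (-θ)) ^ 2 * t ^ 2 := by
    have h1 := pow_le_pow_left₀ hN h 2
    have h2 := two_mul_le_add_sq (A * (1 + t)) (L * δ ^ (-θ) * t)
    have h3 : A ^ 2 * (1 + t) ^ 2 ≤ 2 * A ^ 2 * (1 + t ^ 2) := by
      nlinarith [mul_nonneg (sq_nonneg A) (sq_nonneg (1 - t))]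
    nlinarith
  calc δ * N ^ 2
      ≤ δ * (4 * A ^ 2 * (1 + t ^ 2) + 2 * L ^ 2 * (δ ^ (-θ)) ^ 2 * t ^ 2) :=
        mul_le_mul_of_nonneg_left hsq hδ.le
    _ = 4 * A ^ 2 * δ + (4 * A ^ 2 * δ + 2 * L ^ 2 * (δ * (δ ^ (-θ)) ^ 2)) * t ^ 2 := by ring
    _ = _ := by rw [hpow]

lemma eventually_mul_add_mul_rpow_lt {a b p ε : ℝ} (hp : 0 < p) (hε : 0 < ε) :
    ∀ᶠ δ in nhds 0, a * δ + b * δ ^ p < ε := by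
  have hcont : Continuous fun δ : ℝ => a * δ + b * δ ^ p := by fun_prop (disch := exact hp.le)
  refine (hcont.tendsto 0).eventually_lt_const ?_
  simpa [Real.zero_rpow hp.ne'] using hε

section TamedDrift

variable {d : ℕ} {b₀ b₁ : EuclideanSpace ℝ (Fin d) → EuclideanSpace ℝ (Fin d)}
  {lamStar δ θ ℓ₀ : ℝ}

lemma tamedDrift_eq (x : EuclideanSpace ℝ (Fin d)) :
    tamedDrift b₀ b₁ lamStar δ θ ℓ₀ x
      = b₀ x - lamStar • x + tamingFactor δ θ ℓ₀ ‖x‖ • (b₁ x + lamStar • x) := rfl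

lemma inner_tamedDrift_le {C : ℝ} (hδ : 0 ≤ δ) (hC : 0 ≤ C) {x : EuclideanSpace ℝ (Fin d)}
    (hx : ⟪x, b₁ x⟫ ≤ -(lamStar * ‖x‖ ^ 2) + C) :
    ⟪x, tamedDrift b₀ b₁ lamStar δ θ ℓ₀ x⟫ ≤ ⟪x, b₀ x⟫ - lamStar * ‖x‖ ^ 2 + C := by
  set g := tamingFactor δ θ ℓ₀ ‖x‖
  have hg0 : 0 ≤ g := (tamingFactor_pos hδ (norm_nonneg x)).le
  have hg1 : g ≤ 1 := tamingFactor_le_one hδ (norm_nonneg x)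
  have hx' : ⟪x, b₁ x⟫ + lamStar * ‖x‖ ^ 2 ≤ C := by linarith
  calc ⟪x, tamedDrift b₀ b₁ lamStar δ θ ℓ₀ x⟫
      = ⟪x, b₀ x⟫ - lamStar * ‖x‖ ^ 2 + g * (⟪x, b₁ x⟫ + lamStar * ‖x‖ ^ 2) := by
        rw [tamedDrift_eq, inner_add_right, inner_sub_right, real_inner_smul_right,
          real_inner_smul_right, inner_add_right, real_inner_smul_right,
          real_inner_self_eq_norm_sq]
    _ ≤ ⟪x, b₀ x⟫ - lamStar * ‖x‖ ^ 2 + C := by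
        gcongr
        exact (mul_le_mul_of_nonneg_left hx' hg0).trans (mul_le_of_le_one_left hC hg1)

lemma norm_tamedDrift_le {K α L M₀ M₁ : ℝ}
    (hb₀ : ∀ x y, ‖b₀ x - b₀ y‖ ≤ K * ‖x - y‖ ^ α)
    (hb₁ : ∀ x y, ‖b₁ x - b₁ y‖ ≤ L * (1 + ‖x‖ ^ ℓ₀ + ‖y‖ ^ ℓ₀) * ‖x - y‖)
    (h₀ : ‖b₀ 0‖ ≤ M₀) (h₁ : ‖b₁ 0‖ ≤ M₁) (hK : 0 ≤ K) (hα : α ∈ Icc (0:ℝ) 1) (hL : 0 ≤ L)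
    (hℓ₀ : ℓ₀ ≠ 0) (hlam : 0 ≤ lamStar) (hδ : 0 < δ) (x : EuclideanSpace ℝ (Fin d)) :
    ‖tamedDrift b₀ b₁ lamStar δ θ ℓ₀ x‖
      ≤ (K + M₀ + M₁ + 2 * lamStar + L) * (1 + ‖x‖) + L * δ ^ (-θ) * ‖x‖ := by
  set t := ‖x‖
  set g := tamingFactor δ θ ℓ₀ t
  have ht : 0 ≤ t := norm_nonneg x
  have hg0 : 0 ≤ g := (tamingFactor_pos hδ.le ht).le
  have hg1 : g ≤ 1 := tamingFactor_le_one hδ.le ht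
  have hM₀ : 0 ≤ M₀ := (norm_nonneg _).trans h₀
  have hM₁ : 0 ≤ M₁ := (norm_nonneg _).trans h₁
  have hb₀x : ‖b₀ x‖ ≤ K * (1 + t) + M₀ := by
    have := mul_le_mul_of_nonneg_left (rpow_le_one_add ht hα) hK
    linarith [norm_le_of_holder hb₀ x]
  have hb₁x : ‖b₁ x + lamStar • x‖ ≤ L * t + L * t ^ ℓ₀ * t + M₁ + lamStar * t := by
    have := norm_le_of_polynomial_lipschitz hℓ₀ hb₁ x
    have hsmul : ‖lamStar • x‖ = lamStar * t := by rw [norm_smul, Real.norm_of_nonneg hlam]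
    linarith [norm_add_le (b₁ x) (lamStar • x)]
  have htamed : g * ‖b₁ x + lamStar • x‖ ≤ L * t + L * δ ^ (-θ) * t + M₁ + lamStar * t := by
    have hgt : g * t ^ ℓ₀ ≤ δ ^ (-θ) := tamingFactor_mul_rpow_le hδ ht
    calc g * ‖b₁ x + lamStar • x‖ ≤ g * (L * t + L * t ^ ℓ₀ * t + M₁ + lamStar * t) :=
          mul_le_mul_of_nonneg_left hb₁x hg0
      _ = g * (L * t + M₁ + lamStar * t) + L * t * (g * t ^ ℓ₀) := by ring
      _ ≤ (L * t + M₁ + lamStar * t) + L * t * δ ^ (-θ) := by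
          gcongr
          exact mul_le_of_le_one_left (by positivity) hg1
      _ = _ := by ring
  calc ‖tamedDrift b₀ b₁ lamStar δ θ ℓ₀ x‖
      ≤ ‖b₀ x‖ + ‖lamStar • x‖ + ‖g • (b₁ x + lamStar • x)‖ := by
        rw [tamedDrift_eq]
        exact (norm_add_le _ _).trans (by gcongr; exact norm_sub_le _ _)
    _ = ‖b₀ x‖ + lamStar * t + g * ‖b₁ x + lamStar • x‖ := by
        rw [norm_smul, norm_smul, Real.norm_of_nonneg hlam, Real.norm_of_nonneg hg0]
    _ ≤ _ := by nlinarith [mul_nonneg hM₀ ht, mul_nonneg hM₁ ht]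

end TamedDrift

theorem stmt_12_general (K₂ α L₀ ℓ₀ θ lamStar Cstar M₀ M₁ : ℝ)
    (hK₂ : 0 < K₂) (hα : α ∈ Set.Ioo (0:ℝ) 1) (hL₀ : 0 < L₀) (hℓ₀ : 0 < ℓ₀)
    (hθ : θ ∈ Set.Ioo (0:ℝ) (1/2)) (hlam : 0 < lamStar) (hCstar : 0 < Cstar) :
    ∃ δ₀ ∈ Set.Ioc (0:ℝ) 1, ∃ C > (0:ℝ), ∀ d : ℕ, 1 ≤ d →
      ∀ b₀ b₁ : EuclideanSpace ℝ (Fin d) → EuclideanSpace ℝ (Fin d),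
        (∀ x y, ‖b₀ x - b₀ y‖ ≤ K₂ * ‖x - y‖ ^ α) →
        (∀ x y, ‖b₁ x - b₁ y‖ ≤ L₀ * (1 + ‖x‖ ^ ℓ₀ + ‖y‖ ^ ℓ₀) * ‖x - y‖) →
        (∀ x, ⟪x, b₁ x⟫ ≤ -(lamStar * ‖x‖ ^ 2) + Cstar) →
        ‖b₀ (0 : EuclideanSpace ℝ (Fin d))‖ ≤ M₀ →
        ‖b₁ (0 : EuclideanSpace ℝ (Fin d))‖ ≤ M₁ →
        ∀ δ ∈ Set.Ioc (0:ℝ) δ₀, ∀ x : EuclideanSpace ℝ (Fin d),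
          ⟪x, tamedDrift b₀ b₁ lamStar δ θ ℓ₀ x⟫
              + δ * ‖tamedDrift b₀ b₁ lamStar δ θ ℓ₀ x‖ ^ 2
            ≤ -(lamStar / 4 * ‖x‖ ^ 2) + C := by
  obtain ⟨C₀, hC₀⟩ := exists_mul_rpow_add_le_sq_add (Ioo_subset_Ico_self hα)
    (by positivity : 0 < lamStar / 4) hK₂ M₀
  have hC₀0 : 0 ≤ C₀ := by simpa using hC₀ 0 le_rfl
  set A := K₂ + M₀ + M₁ + 2 * lamStar + L₀
  obtain ⟨δ₀, hδ₀, hsmall⟩ := exists_Ioc_forall_of_eventually_nhds_zero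
    (eventually_mul_add_mul_rpow_lt (a := 4 * A ^ 2) (b := 2 * L₀ ^ 2)
      (by linarith [hθ.2] : 0 < 1 - 2 * θ) (by positivity : 0 < lamStar / 4))
  refine ⟨δ₀, hδ₀, C₀ + Cstar + 4 * A ^ 2, by positivity, ?_⟩
  intro d _ b₀ b₁ hb₀ hb₁ hdiss h₀ h₁ δ hδ x
  have hinner := inner_tamedDrift_le (b₀ := b₀) (θ := θ) (ℓ₀ := ℓ₀) hδ.1.le hCstar.le (hdiss x)
  have hb₀x : ⟪x, b₀ x⟫ ≤ lamStar / 4 * ‖x‖ ^ 2 + C₀ :=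
    calc ⟪x, b₀ x⟫ ≤ ‖x‖ * ‖b₀ x‖ := real_inner_le_norm _ _
      _ ≤ ‖x‖ * (K₂ * ‖x‖ ^ α + M₀) := by
          gcongr
          linarith [norm_le_of_holder hb₀ x]
      _ ≤ _ := hC₀ _ (norm_nonneg x)
  have hdrift := mul_sq_le_of_le_add_rpow_neg_mul (norm_nonneg _) hδ.1
    (norm_tamedDrift_le (θ := θ) hb₀ hb₁ h₀ h₁ hK₂.le (Ioo_subset_Icc_self hα) hL₀.le hℓ₀.ne'
      hlam.le hδ.1 x)
  have hcoef := mul_le_mul_of_nonneg_right (hsmall δ hδ).le (sq_nonneg ‖x‖)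
  have hconst : 4 * A ^ 2 * δ ≤ 4 * A ^ 2 :=
    mul_le_of_le_one_right (by positivity) (hδ.2.trans hδ₀.2)
  linarith [mul_nonneg hlam.le (sq_nonneg ‖x‖)]

/-- The constants `δ₀` and `C` depend only on `λ*, C*, K₂, α, L₀, ℓ₀, θ, |b₀(0)|, |b₁(0)|`:
they are chosen before the dimension `d` and the drifts `b₀, b₁` (whose values at `0` are
controlled by `M₀, M₁`). -/
theorem stmt_12 (K₂ α L₀ ℓ₀ θ lamStar Cstar M₀ M₁ : ℝ)
    (hK₂ : 0 < K₂) (hα : α ∈ Set.Ioo (0:ℝ) 1) (hL₀ : 0 < L₀) (hℓ₀ : 0 < ℓ₀)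
    (hθ : θ ∈ Set.Ioo (0:ℝ) (1/2)) (hlam : 0 < lamStar) (hCstar : 0 < Cstar)
    (hM₀ : 0 ≤ M₀) (hM₁ : 0 ≤ M₁) :
    ∃ δ₀ ∈ Set.Ioc (0:ℝ) 1, ∃ C > (0:ℝ), ∀ d : ℕ, 1 ≤ d →
      ∀ b₀ b₁ : EuclideanSpace ℝ (Fin d) → EuclideanSpace ℝ (Fin d),
        (∀ x y, ‖b₀ x - b₀ y‖ ≤ K₂ * ‖x - y‖ ^ α) →
        (∀ x y, ‖b₁ x - b₁ y‖ ≤ L₀ * (1 + ‖x‖ ^ ℓ₀ + ‖y‖ ^ ℓ₀) * ‖x - y‖) →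
        (∀ x, ⟪x, b₁ x⟫ ≤ -(lamStar * ‖x‖ ^ 2) + Cstar) →
        ‖b₀ (0 : EuclideanSpace ℝ (Fin d))‖ ≤ M₀ →
        ‖b₁ (0 : EuclideanSpace ℝ (Fin d))‖ ≤ M₁ →
        ∀ δ ∈ Set.Ioc (0:ℝ) δ₀, ∀ x : EuclideanSpace ℝ (Fin d),
          ⟪x, tamedDrift b₀ b₁ lamStar δ θ ℓ₀ x⟫
              + δ * ‖tamedDrift b₀ b₁ lamStar δ θ ℓ₀ x‖ ^ 2
            ≤ -(lamStar / 4 * ‖x‖ ^ 2) + C :=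
  stmt_12_general K₂ α L₀ ℓ₀ θ lamStar Cstar M₀ M₁ hK₂ hα hL₀ hℓ₀ hθ hlam hCstar
end

section
/- For all x, y ∈ ℝ^d: ⟨∇U(x) + (1/2)((1−λ)x + y), y⟩ − (1/2)⟨x + 2y, ∇U(x) + y⟩ + d/2 = −(1/2)(⟨x, ∇U(x)⟩ + |y|² + λ⟨x,y⟩ − d), and this quantity is ≤ −(λ_*/2)·V_λ(x,y) + (1/2)(d + λ₂ + C⋆ + λ₂|min U|). (The left-hand side equals ⟨∇_xV_λ(x,y), y⟩ − ⟨∇_yV_λ(x,y), ∇U(x)+y⟩ + (1/2)Δ_yV_λ(x,y), i.e. the kinetic Langevin generator applied to V_λ, since ∇_xV_λ(x,y) = ∇U(x) + (1/2)((1−λ)x + y), ∇_yV_λ(x,y) = (1/2)(x+2y) and Δ_yV_λ = d.) -/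
/-! The identity is bilinear bookkeeping. For the drift bound, coercivity replaces `⟪x, ∇U x⟫`
by `λ₁|x|² + λ₂ U x - C⋆`. The potential part of `V_λ` is then absorbed because `λ_* ≤ λ₂`, and the
quadratic part `Q = (1-λ)|x|² + 2|y|² + 2⟪x, y⟫ ≥ 0` because `λ_* ≤ 4κ` and `κ` is small enough for
`λ₁|x|² + |y|² + λ⟪x, y⟫ - κ Q` to be a quadratic form in `(|x|, |y|, ⟪x, y⟫)` with nonpositive
discriminant, hence nonnegative by Cauchy–Schwarz. -/

open scoped RealInnerProductSpace
open Real Set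

/-- `κ := min( (4λ₁−λ²)/(8(7/4−λ)), 3(4λ₁−λ²)/(10(λ²+4λ₁)) )`. -/
noncomputable def kappaConst (lam1 lam : ℝ) : ℝ :=
  min ((4 * lam1 - lam ^ 2) / (8 * (7/4 - lam)))
    (3 * (4 * lam1 - lam ^ 2) / (10 * (lam ^ 2 + 4 * lam1)))

/-- `λ_* := min(4κ, λ₂)`. -/
noncomputable def lamStarConst (lam1 lam2 lam : ℝ) : ℝ :=
  min (4 * kappaConst lam1 lam) lam2

/-- `V_λ(x,y) := 1 + U(x) − m + (1/4)(|x+y|² + |y|² − λ|x|²)`, where `m = min U`. -/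
noncomputable def Vlam {d : ℕ} (U : EuclideanSpace ℝ (Fin d) → ℝ) (m lam : ℝ)
    (x y : EuclideanSpace ℝ (Fin d)) : ℝ :=
  1 + U x - m + (1/4) * (‖x + y‖ ^ 2 + ‖y‖ ^ 2 - lam * ‖x‖ ^ 2)


section Constants

variable {lam1 lam : ℝ}

theorem kappaConst_pos (hlam : lam ≤ 1/2) (hlam1 : lam ^ 2 < 4 * lam1) :
    0 < kappaConst lam1 lam :=
  lt_min (div_pos (by linarith) (by linarith))
    (div_pos (by linarith) (by nlinarith))

theorem kappaConst_mul_le_left (hlam : lam ≤ 1/2) :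
    kappaConst lam1 lam * (8 * (7/4 - lam)) ≤ 4 * lam1 - lam ^ 2 :=
  (le_div_iff₀ (by linarith)).mp (min_le_left _ _)

theorem kappaConst_mul_le_right (hlam1 : lam ^ 2 < 4 * lam1) :
    kappaConst lam1 lam * (10 * (lam ^ 2 + 4 * lam1)) ≤ 3 * (4 * lam1 - lam ^ 2) :=
  (le_div_iff₀ (by nlinarith)).mp (min_le_right _ _)

theorem kappaConst_mul_le (hlam0 : 0 ≤ lam) (hlam : lam ≤ 1/2) (hlam1 : lam ^ 2 < 4 * lam1) :
    kappaConst lam1 lam * (8 * lam1 + 4 - 8 * lam) ≤ 4 * lam1 - lam ^ 2 := by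
  have hk := (kappaConst_pos hlam hlam1).le
  -- the first bound in `kappaConst` suffices when `lam1 ≤ 5/4`, the second one when `lam1 ≥ 3/4`
  rcases le_or_gt lam1 (5/4) with h | h
  · have := mul_le_mul_of_nonneg_left
      (by linarith : 8 * lam1 + 4 - 8 * lam ≤ 8 * (7/4 - lam)) hk
    linarith [kappaConst_mul_le_left (lam1 := lam1) hlam]
  · have := mul_le_mul_of_nonneg_left
      (by nlinarith : 8 * lam1 + 4 - 8 * lam ≤ 10 * (lam ^ 2 + 4 * lam1) / 3) hk
    linarith [kappaConst_mul_le_right hlam1]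

theorem kappaConst_discrim_le (hlam0 : 0 ≤ lam) (hlam : lam ≤ 1/2) (hlam1 : lam ^ 2 < 4 * lam1) :
    (lam - 2 * kappaConst lam1 lam) ^ 2
      ≤ 4 * (lam1 - kappaConst lam1 lam * (1 - lam)) * (1 - 2 * kappaConst lam1 lam) := by
  set k := kappaConst lam1 lam
  have hexpand : 4 * (lam1 - k * (1 - lam)) * (1 - 2 * k) - (lam - 2 * k) ^ 2
      = (4 * lam1 - lam ^ 2) - k * (8 * lam1 + 4 - 8 * lam) + 4 * k ^ 2 * (1 - 2 * lam) := by
    ring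
  have := kappaConst_mul_le hlam0 hlam hlam1
  nlinarith [mul_nonneg (sq_nonneg k) (by linarith : (0:ℝ) ≤ 1 - 2 * lam)]

theorem lamStarConst_le_four_mul_kappaConst (lam2 : ℝ) :
    lamStarConst lam1 lam2 lam ≤ 4 * kappaConst lam1 lam :=
  min_le_left _ _

theorem lamStarConst_le (lam2 : ℝ) : lamStarConst lam1 lam2 lam ≤ lam2 :=
  min_le_right _ _

end Constants

section InnerProductSpace

variable {E : Type*} [NormedAddCommGroup E] [InnerProductSpace ℝ E]

/-- Since `(a‖x‖² + b‖y‖²)² ≥ 4ab‖x‖²‖y‖² ≥ c²⟪x, y⟫²` by AM-GM and Cauchy–Schwarz. -/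
theorem quadratic_form_nonneg_of_discrim_le {a b c : ℝ} (ha : 0 ≤ a) (hb : 0 ≤ b)
    (hc : c ^ 2 ≤ 4 * a * b) (x y : E) :
    0 ≤ a * ‖x‖ ^ 2 + b * ‖y‖ ^ 2 + c * ⟪x, y⟫ := by
  have hCS : ⟪x, y⟫ ^ 2 ≤ ‖x‖ ^ 2 * ‖y‖ ^ 2 := by
    rw [← mul_pow]
    exact sq_le_sq' (neg_le_of_abs_le (abs_real_inner_le_norm x y)) (real_inner_le_norm x y)
  have hsum : 0 ≤ a * ‖x‖ ^ 2 + b * ‖y‖ ^ 2 := by positivity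
  have hsq : (c * ⟪x, y⟫) ^ 2 ≤ (a * ‖x‖ ^ 2 + b * ‖y‖ ^ 2) ^ 2 :=
    calc (c * ⟪x, y⟫) ^ 2 = c ^ 2 * ⟪x, y⟫ ^ 2 := by ring
      _ ≤ 4 * a * b * (‖x‖ ^ 2 * ‖y‖ ^ 2) :=
        mul_le_mul hc hCS (sq_nonneg _) (by positivity)
      _ ≤ (a * ‖x‖ ^ 2 + b * ‖y‖ ^ 2) ^ 2 := by
        nlinarith [sq_nonneg (a * ‖x‖ ^ 2 - b * ‖y‖ ^ 2)]
  linarith [(abs_le_of_sq_le_sq' hsq hsum).1]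

theorem generator_eq (g x y : E) (lam r : ℝ) :
    ⟪g + (1/2 : ℝ) • ((1 - lam) • x + y), y⟫ - (1/2) * ⟪x + (2:ℝ) • y, g + y⟫ + r / 2
      = -(1/2) * (⟪x, g⟫ + ‖y‖ ^ 2 + lam * ⟪x, y⟫ - r) := by
  simp only [inner_add_left, inner_add_right, real_inner_smul_left,
    real_inner_self_eq_norm_sq, real_inner_comm y x, real_inner_comm y g]
  ring

theorem kappaConst_mul_form_le {lam1 lam : ℝ} (hlam0 : 0 ≤ lam) (hlam : lam ≤ 1/2)
    (hlam1 : lam ^ 2 < 4 * lam1) (x y : E) :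
    kappaConst lam1 lam * ((1 - lam) * ‖x‖ ^ 2 + 2 * ‖y‖ ^ 2 + 2 * ⟪x, y⟫)
      ≤ lam1 * ‖x‖ ^ 2 + ‖y‖ ^ 2 + lam * ⟪x, y⟫ := by
  set k := kappaConst lam1 lam
  have hk1 := kappaConst_mul_le_left (lam1 := lam1) hlam
  have hk2 := kappaConst_mul_le_right hlam1
  have hform := quadratic_form_nonneg_of_discrim_le (a := lam1 - k * (1 - lam))
    (b := 1 - 2 * k) (c := lam - 2 * k) (by nlinarith) (by nlinarith)
    (kappaConst_discrim_le hlam0 hlam hlam1) x y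
  linarith

end InnerProductSpace

theorem Vlam_eq {d : ℕ} (U : EuclideanSpace ℝ (Fin d) → ℝ) (m lam : ℝ)
    (x y : EuclideanSpace ℝ (Fin d)) :
    Vlam U m lam x y
      = 1 + U x - m + (1/4) * ((1 - lam) * ‖x‖ ^ 2 + 2 * ‖y‖ ^ 2 + 2 * ⟪x, y⟫) := by
  rw [Vlam, norm_add_sq_real]
  ring

theorem stmt_18_general (d : ℕ)
    (U : EuclideanSpace ℝ (Fin d) → ℝ)
    (x₀ : EuclideanSpace ℝ (Fin d)) (hx₀ : ∀ x, U x₀ ≤ U x)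
    (lam1 lam2 Cst : ℝ) (hlam2 : 0 < lam2)
    (hgrad : ∀ x, lam1 * ‖x‖ ^ 2 + lam2 * U x - Cst ≤ ⟪x, gradient U x⟫)
    (lam : ℝ) (hlam : lam ∈ Set.Ioo (0:ℝ) (min (2 * Real.sqrt lam1) (1/4))) :
    ∀ x y : EuclideanSpace ℝ (Fin d),
      (⟪gradient U x + (1/2 : ℝ) • ((1 - lam) • x + y), y⟫
          - (1/2) * ⟪x + (2:ℝ) • y, gradient U x + y⟫ + (d : ℝ) / 2
        = -(1/2) * (⟪x, gradient U x⟫ + ‖y‖ ^ 2 + lam * ⟪x, y⟫ - (d : ℝ)))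
      ∧ (⟪gradient U x + (1/2 : ℝ) • ((1 - lam) • x + y), y⟫
          - (1/2) * ⟪x + (2:ℝ) • y, gradient U x + y⟫ + (d : ℝ) / 2
        ≤ -(lamStarConst lam1 lam2 lam / 2) * Vlam U (U x₀) lam x y
          + (1/2) * ((d : ℝ) + lam2 + Cst + lam2 * |U x₀|)) := by
  obtain ⟨hlam0, hlt⟩ := hlam
  have hlam_half : lam ≤ 1/2 := by linarith [min_le_right (2 * √lam1) (1/4)]
  have hlam1 : lam ^ 2 < 4 * lam1 := by
    have := (Real.lt_sqrt (y := lam1) (by linarith : 0 ≤ lam / 2)).mp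
      (by linarith [min_le_left (2 * √lam1) (1/4)])
    linarith
  intro x y
  refine ⟨generator_eq _ _ _ _ _, ?_⟩
  rw [generator_eq, Vlam_eq]
  set Q := (1 - lam) * ‖x‖ ^ 2 + 2 * ‖y‖ ^ 2 + 2 * ⟪x, y⟫
  have hQ : 0 ≤ Q := by
    have := quadratic_form_nonneg_of_discrim_le (a := 1 - lam) (b := 2) (c := 2)
      (by linarith) (by norm_num) (by linarith) x y
    linarith
  have hLQ : lamStarConst lam1 lam2 lam * Q ≤ 4 * kappaConst lam1 lam * Q :=
    mul_le_mul_of_nonneg_right (lamStarConst_le_four_mul_kappaConst lam2) hQ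
  have hLU : lamStarConst lam1 lam2 lam * (1 + U x - U x₀) ≤ lam2 * (1 + U x - U x₀) :=
    mul_le_mul_of_nonneg_right (lamStarConst_le lam2) (by linarith [hx₀ x])
  have hm : lam2 * -U x₀ ≤ lam2 * |U x₀| := mul_le_mul_of_nonneg_left (neg_le_abs _) hlam2.le
  linarith [kappaConst_mul_form_le hlam0.le hlam_half hlam1 x y, hgrad x]

theorem stmt_18 (d : ℕ) (hd : 1 ≤ d)
    (U : EuclideanSpace ℝ (Fin d) → ℝ) (hU : ContDiff ℝ 1 U)
    (hcoer : ∀ M : ℝ, ∃ R : ℝ, ∀ x, R ≤ ‖x‖ → M ≤ U x)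
    (x₀ : EuclideanSpace ℝ (Fin d)) (hx₀ : ∀ x, U x₀ ≤ U x)
    (lam1 lam2 Cst : ℝ) (hlam1 : 0 < lam1) (hlam2 : 0 < lam2) (hCst : 0 < Cst)
    (hgrad : ∀ x, lam1 * ‖x‖ ^ 2 + lam2 * U x - Cst ≤ ⟪x, gradient U x⟫)
    (lam : ℝ) (hlam : lam ∈ Set.Ioo (0:ℝ) (min (2 * Real.sqrt lam1) (1/4))) :
    ∀ x y : EuclideanSpace ℝ (Fin d),
      (⟪gradient U x + (1/2 : ℝ) • ((1 - lam) • x + y), y⟫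
          - (1/2) * ⟪x + (2:ℝ) • y, gradient U x + y⟫ + (d : ℝ) / 2
        = -(1/2) * (⟪x, gradient U x⟫ + ‖y‖ ^ 2 + lam * ⟪x, y⟫ - (d : ℝ)))
      ∧ (⟪gradient U x + (1/2 : ℝ) • ((1 - lam) • x + y), y⟫
          - (1/2) * ⟪x + (2:ℝ) • y, gradient U x + y⟫ + (d : ℝ) / 2
        ≤ -(lamStarConst lam1 lam2 lam / 2) * Vlam U (U x₀) lam x y
          + (1/2) * ((d : ℝ) + lam2 + Cst + lam2 * |U x₀|)) :=
  stmt_18_general d U x₀ hx₀ lam1 lam2 Cst hlam2 hgrad lam hlam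
end
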